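/- For all r > 0 one has ψ₁(r) ≤ C₀(ε,c)·ψ₂(r), where C₀(ε,c) = max{ (2e²/ε)(1 + 2/√ε)√(2/(c-ε)), ((2+√ε)/(ε(1-e^{-2})))( 2√2·e²/√(ε(c-ε)) + 1/(c-ε) ) }. -/

import Mathlib

open MeasureTheory Real

/-- `ψ₁ c ε r = ∫₀^r e^{c s²/2} (∫_s^∞ e^{-(c-ε) u²/2} du) ds`. -/
noncomputable def psi1 (c ε r : ℝ) : ℝ :=
  ∫ s in (0:ℝ)..r, Real.exp (c * s ^ 2 / 2) * ∫ u in Set.Ioi s, Real.exp (-(c - ε) * u ^ 2 / 2)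

/-- `ψ₂ ε r = (e^{ε r²/2} - 1)/(r(1+r))`. -/
noncomputable def psi2 (ε r : ℝ) : ℝ :=
  (Real.exp (ε * r ^ 2 / 2) - 1) / (r * (1 + r))

/-- The explicit constant `C₀(ε,c)` of Lemma 2.4. -/
noncomputable def C0const (ε c : ℝ) : ℝ :=
  max ((2 * Real.exp 2 / ε) * (1 + 2 / Real.sqrt ε) * Real.sqrt (2 / (c - ε)))
    (((2 + Real.sqrt ε) / (ε * (1 - Real.exp (-2)))) *
      (2 * Real.sqrt 2 * Real.exp 2 / Real.sqrt (ε * (c - ε)) + 1 / (c - ε)))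

/-!
Write `a = c - ε`. The shift `u = s + t` gives
`∫_s^∞ e^{-a u²/2} du = e^{-a s²/2} ∫_0^∞ e^{-a t²/2} e^{-a s t} dt`, and dropping either factor
of the last integrand bounds the tail by `e^{-a s²/2} √(2/a)` and by `e^{-a s²/2} / (a s)`.
Hence the integrand of `ψ₁` is at most `√(2/a) e^{ε s²/2}` and at most `e^{ε s²/2} / (a s)`.

For `r ≤ r₀ = 2/√ε` the first bound gives `ψ₁(r) ≤ r √(2/a) e²`, and `e^x - 1 ≥ x` bounds `ψ₂`
from below. For `r ≥ r₀` we split at `r₀`: on `[r₀, r]` we have `ε s² ≥ 4`, so the second bound is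
dominated by the derivative of `2 e^{ε s²/2} / (a ε s²)`, and now `e^x - 1 ≥ (1 - e^{-2}) e^x`
for `x = ε r²/2 ≥ 2`.
-/

open Set

noncomputable def gaussianTail (a s : ℝ) : ℝ := ∫ u in Ioi s, exp (-a * u ^ 2 / 2)

lemma setIntegral_Ioi_comp_add_right (f : ℝ → ℝ) (s : ℝ) :
    ∫ t in Ioi 0, f (t + s) = ∫ u in Ioi s, f u := by
  have h := (measurePreserving_add_right volume s).setIntegral_preimage_emb
    (measurableEmbedding_addRight s) f (Ioi s)
  rwa [show (· + s) ⁻¹' Ioi s = Ioi 0 by ext; simp] at h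

lemma neg_mul_sq_div_two (a u : ℝ) : -a * u ^ 2 / 2 = -(a / 2) * u ^ 2 := by ring

lemma gaussianTail_eq (a s : ℝ) : gaussianTail a s =
    exp (-a * s ^ 2 / 2) * ∫ t in Ioi 0, exp (-a * t ^ 2 / 2) * exp (-(a * s) * t) := by
  rw [gaussianTail, ← setIntegral_Ioi_comp_add_right, ← integral_const_mul]
  congr 1 with t
  rw [← exp_add, ← exp_add]
  ring_nf

section GaussianTail

variable {a : ℝ}

lemma integrable_exp_neg_mul_sq_div_two (ha : 0 < a) :
    Integrable fun u : ℝ => exp (-a * u ^ 2 / 2) := by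
  simpa only [neg_mul_sq_div_two] using integrable_exp_neg_mul_sq (half_pos ha)

lemma gaussianTail_antitone (ha : 0 < a) : Antitone (gaussianTail a) :=
  fun _ _ hst => setIntegral_mono_set (integrable_exp_neg_mul_sq_div_two ha).integrableOn
    (.of_forall fun _ => (exp_pos _).le) (Ioi_subset_Ioi hst).eventuallyLE

lemma gaussianTail_le_of_le {s : ℝ} {g : ℝ → ℝ}
    (hg : IntegrableOn g (Ioi 0))
    (hle : ∀ t ∈ Ioi (0 : ℝ), exp (-a * t ^ 2 / 2) * exp (-(a * s) * t) ≤ g t) :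
    gaussianTail a s ≤ exp (-a * s ^ 2 / 2) * ∫ t in Ioi 0, g t := by
  rw [gaussianTail_eq]
  exact mul_le_mul_of_nonneg_left (integral_mono_of_nonneg (.of_forall fun _ => by positivity) hg
    ((ae_restrict_mem measurableSet_Ioi).mono hle)) (exp_pos _).le

lemma gaussianTail_le_mul_sqrt (ha : 0 < a) {s : ℝ} (hs : 0 ≤ s) :
    gaussianTail a s ≤ exp (-a * s ^ 2 / 2) * √(2 / a) := by
  refine (gaussianTail_le_of_le (integrable_exp_neg_mul_sq_div_two ha).integrableOn
    fun t ht => mul_le_of_le_one_right (exp_pos _).le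
      (exp_le_one_iff.2 (by nlinarith [mul_pos ha ht.out]))).trans ?_
  refine mul_le_mul_of_nonneg_left ?_ (exp_pos _).le
  simp only [neg_mul_sq_div_two]
  rw [integral_gaussian_Ioi, div_le_iff₀ two_pos, sqrt_le_iff, mul_pow, sq_sqrt (by positivity)]
  refine ⟨by positivity, ?_⟩
  rw [div_le_iff₀ (half_pos ha)]
  nlinarith [pi_le_four, div_mul_cancel₀ 2 ha.ne']

lemma gaussianTail_le_div (ha : 0 < a) {s : ℝ} (hs : 0 < s) :
    gaussianTail a s ≤ exp (-a * s ^ 2 / 2) / (a * s) := by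
  have has : -(a * s) < 0 := neg_lt_zero.2 (mul_pos ha hs)
  refine (gaussianTail_le_of_le (integrableOn_exp_mul_Ioi has 0)
    fun t _ => mul_le_of_le_one_left (exp_pos _).le
      (exp_le_one_iff.2 (by nlinarith [sq_nonneg t]))).trans ?_
  rw [integral_exp_mul_Ioi has]
  simp [div_eq_mul_inv]

end GaussianTail

lemma hasDerivAt_two_mul_exp_div {ε s : ℝ} (hε : ε ≠ 0) (hs : s ≠ 0) :
    HasDerivAt (fun s => 2 * exp (ε * s ^ 2 / 2) / (ε * s ^ 2))
      (2 * exp (ε * s ^ 2 / 2) / s - 4 * exp (ε * s ^ 2 / 2) / (ε * s ^ 3)) s := by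
  have hsq : HasDerivAt (fun s => ε * s ^ 2) (ε * (2 * s)) s := by
    simpa using (hasDerivAt_pow 2 s).const_mul ε
  have hexp : HasDerivAt (fun s => 2 * exp (ε * s ^ 2 / 2)) (2 * (exp (ε * s ^ 2 / 2) * (ε * s))) s :=
    ((hsq.div_const 2).exp.const_mul 2).congr_deriv (by ring)
  refine (hexp.div hsq (by positivity)).congr_deriv ?_
  field_simp
  ring

lemma one_sub_exp_neg_mul_exp_le {a x : ℝ} (hax : a ≤ x) : (1 - exp (-a)) * exp x ≤ exp x - 1 := by
  have : 1 ≤ exp (-a) * exp x := by rw [← exp_add]; exact one_le_exp (by linarith)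
  linarith

lemma psi1_eq (c ε r : ℝ) :
    psi1 c ε r = ∫ s in (0:ℝ)..r, exp (c * s ^ 2 / 2) * gaussianTail (c - ε) s := rfl

lemma exp_mul_exp_neg_sub (c ε s : ℝ) :
    exp (c * s ^ 2 / 2) * exp (-(c - ε) * s ^ 2 / 2) = exp (ε * s ^ 2 / 2) := by
  rw [← exp_add]; ring_nf

section Psi1

variable {c ε : ℝ}

lemma exp_mul_gaussianTail_le_sqrt (hεc : ε < c) {s : ℝ} (hs : 0 ≤ s) :
    exp (c * s ^ 2 / 2) * gaussianTail (c - ε) s ≤ √(2 / (c - ε)) * exp (ε * s ^ 2 / 2) :=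
  calc _ ≤ exp (c * s ^ 2 / 2) * (exp (-(c - ε) * s ^ 2 / 2) * √(2 / (c - ε))) :=
        mul_le_mul_of_nonneg_left (gaussianTail_le_mul_sqrt (sub_pos.2 hεc) hs) (exp_pos _).le
    _ = _ := by rw [← mul_assoc, exp_mul_exp_neg_sub, mul_comm]

lemma exp_mul_gaussianTail_le_div (hεc : ε < c) {s : ℝ} (hs : 0 < s) :
    exp (c * s ^ 2 / 2) * gaussianTail (c - ε) s ≤ exp (ε * s ^ 2 / 2) / ((c - ε) * s) :=
  calc _ ≤ exp (c * s ^ 2 / 2) * (exp (-(c - ε) * s ^ 2 / 2) / ((c - ε) * s)) :=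
        mul_le_mul_of_nonneg_left (gaussianTail_le_div (sub_pos.2 hεc) hs) (exp_pos _).le
    _ = _ := by rw [mul_div_assoc', exp_mul_exp_neg_sub]

lemma intervalIntegrable_exp_mul_gaussianTail (hεc : ε < c) (p q : ℝ) :
    IntervalIntegrable (fun s => exp (c * s ^ 2 / 2) * gaussianTail (c - ε) s) volume p q :=
  (gaussianTail_antitone (sub_pos.2 hεc)).intervalIntegrable.continuousOn_mul (by fun_prop)

lemma psi1_le_mul_sqrt_mul_exp (hε : 0 ≤ ε) (hεc : ε < c) {r : ℝ} (hr : 0 ≤ r) :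
    psi1 c ε r ≤ r * (√(2 / (c - ε)) * exp (ε * r ^ 2 / 2)) :=
  calc psi1 c ε r ≤ ∫ _ in (0:ℝ)..r, √(2 / (c - ε)) * exp (ε * r ^ 2 / 2) :=
        intervalIntegral.integral_mono_on hr (intervalIntegrable_exp_mul_gaussianTail hεc 0 r)
          intervalIntegrable_const fun s hs =>
            (exp_mul_gaussianTail_le_sqrt hεc hs.1).trans (by gcongr; exacts [hs.1, hs.2])
    _ = _ := by rw [intervalIntegral.integral_const, smul_eq_mul, sub_zero]

lemma psi1_le_psi1_add (hε : 0 < ε) (hεc : ε < c) {p r : ℝ} (hp : 0 < p) (hεp : 4 ≤ ε * p ^ 2)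
    (hpr : p ≤ r) :
    psi1 c ε r ≤ psi1 c ε p + 2 * exp (ε * r ^ 2 / 2) / (ε * r ^ 2) / (c - ε) := by
  have hint := intervalIntegrable_exp_mul_gaussianTail hεc
  have hg : ∀ x ∈ Icc p r, HasDerivAt (fun s => 2 * exp (ε * s ^ 2 / 2) / (ε * s ^ 2) / (c - ε))
      ((2 * exp (ε * x ^ 2 / 2) / x - 4 * exp (ε * x ^ 2 / 2) / (ε * x ^ 3)) / (c - ε)) x :=
    fun x hx => (hasDerivAt_two_mul_exp_div hε.ne' (hp.trans_le hx.1).ne').div_const _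
  have hbound : ∀ x ∈ Ioo p r, exp (c * x ^ 2 / 2) * gaussianTail (c - ε) x ≤
      (2 * exp (ε * x ^ 2 / 2) / x - 4 * exp (ε * x ^ 2 / 2) / (ε * x ^ 3)) / (c - ε) := by
    intro x hx
    have hx0 : 0 < x := hp.trans hx.1
    have hεx : 4 ≤ ε * x ^ 2 := hεp.trans (by gcongr; exact hx.1.le)
    have : 4 * exp (ε * x ^ 2 / 2) / (ε * x ^ 3) ≤ exp (ε * x ^ 2 / 2) / x := by
      rw [div_le_div_iff₀ (by positivity) hx0]
      nlinarith [mul_nonneg (mul_nonneg (exp_pos (ε * x ^ 2 / 2)).le hx0.le) (sub_nonneg.2 hεx)]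
    calc _ ≤ exp (ε * x ^ 2 / 2) / ((c - ε) * x) := exp_mul_gaussianTail_le_div hεc hx0
      _ = exp (ε * x ^ 2 / 2) / x / (c - ε) := by rw [div_div, mul_comm x]
      _ ≤ _ := by
        refine div_le_div_of_nonneg_right ?_ (sub_pos.2 hεc).le
        linarith [mul_div_assoc 2 (exp (ε * x ^ 2 / 2)) x]
  have hftc := intervalIntegral.integral_le_sub_of_hasDeriv_right_of_le hpr
    (fun x hx => (hg x hx).continuousAt.continuousWithinAt)
    (fun x hx => (hg x (Ioo_subset_Icc_self hx)).hasDerivWithinAt)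
    ((intervalIntegrable_iff_integrableOn_Icc_of_le hpr).1 (hint p r)) hbound
  simp only [psi1_eq]
  rw [← intervalIntegral.integral_add_adjacent_intervals (hint 0 p) (hint p r)]
  have : 0 ≤ 2 * exp (ε * p ^ 2 / 2) / (ε * p ^ 2) / (c - ε) := by
    have := sub_pos.2 hεc; positivity
  linarith

lemma psi1_le_of_le_two_div_sqrt (hε : 0 < ε) (hεc : ε < c) {r : ℝ} (hr : 0 < r)
    (hr₀ : r ≤ 2 / √ε) :
    psi1 c ε r ≤ 2 * exp 2 / ε * (1 + 2 / √ε) * √(2 / (c - ε)) * psi2 ε r := by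
  set S := √(2 / (c - ε))
  have hX : ε * r ^ 2 / 2 ≤ 2 := by
    have : √ε * r ≤ 2 := by rwa [le_div_iff₀ (sqrt_pos.2 hε), mul_comm] at hr₀
    nlinarith [sq_sqrt hε.le, mul_nonneg (sqrt_nonneg ε) hr.le]
  calc psi1 c ε r ≤ r * (S * exp (ε * r ^ 2 / 2)) := psi1_le_mul_sqrt_mul_exp hε.le hεc hr.le
    _ ≤ r * (S * exp 2) := by gcongr
    _ ≤ r * (S * exp 2) * ((1 + 2 / √ε) / (1 + r)) :=
        le_mul_of_one_le_right (by positivity) ((one_le_div (by positivity)).2 (by linarith))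
    _ = 2 * exp 2 / ε * (1 + 2 / √ε) * S * (ε * r ^ 2 / 2 / (r * (1 + r))) := by
        field_simp
    _ ≤ _ := by
        unfold psi2
        gcongr
        linarith [add_one_le_exp (ε * r ^ 2 / 2)]

lemma psi1_le_of_two_div_sqrt_le (hε : 0 < ε) (hεc : ε < c) {r : ℝ} (hr₀ : 2 / √ε ≤ r) :
    psi1 c ε r ≤ (2 + √ε) / (ε * (1 - exp (-2))) *
      (2 * √2 * exp 2 / √(ε * (c - ε)) + 1 / (c - ε)) * psi2 ε r := by
  have hsε := sqrt_pos.2 hε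
  have hr : 0 < r := (by positivity : 0 < 2 / √ε).trans_le hr₀
  have hεr₀ : ε * (2 / √ε) ^ 2 = 4 := by
    rw [div_pow, sq_sqrt hε.le, mul_div_cancel₀ _ hε.ne']
    norm_num
  have hsr : 2 ≤ √ε * r := by rwa [div_le_iff₀ hsε, mul_comm] at hr₀
  have hX : 2 ≤ ε * r ^ 2 / 2 := by nlinarith [sq_sqrt hε.le]
  have he2 : 0 < 1 - exp (-2) := sub_pos.2 (exp_lt_one_iff.2 (by norm_num))
  have hca := sub_pos.2 hεc
  have hA : psi1 c ε (2 / √ε) ≤ 2 * √2 * exp 2 / √(ε * (c - ε)) := by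
    calc _ ≤ 2 / √ε * (√(2 / (c - ε)) * exp (ε * (2 / √ε) ^ 2 / 2)) :=
          psi1_le_mul_sqrt_mul_exp hε.le hεc (by positivity)
      _ = _ := by
          rw [hεr₀, sqrt_div zero_le_two, sqrt_mul hε.le, show (4 : ℝ) / 2 = 2 by norm_num]
          field_simp
  set A := 2 * √2 * exp 2 / √(ε * (c - ε))
  set E := exp (ε * r ^ 2 / 2)
  have hAE : A ≤ 2 / ε * A * E / r ^ 2 :=
    calc A ≤ A * (E / (ε * r ^ 2 / 2)) := le_mul_of_one_le_right (by positivity)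
          ((one_le_div (by positivity)).2 (by linarith [add_one_le_exp (ε * r ^ 2 / 2)]))
      _ = 2 / ε * A * E / r ^ 2 := by field_simp
  calc psi1 c ε r ≤ psi1 c ε (2 / √ε) + 2 * E / (ε * r ^ 2) / (c - ε) :=
        psi1_le_psi1_add hε hεc (by positivity) hεr₀.ge hr₀
    _ ≤ 2 / ε * A * E / r ^ 2 + 2 * E / (ε * r ^ 2) / (c - ε) := by grw [hA, hAE]
    _ = (2 + √ε) / (ε * (1 - exp (-2))) * (A + 1 / (c - ε)) *
          ((1 - exp (-2)) * E / ((2 + √ε) * r ^ 2 / 2)) := by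
        field_simp
    _ ≤ (2 + √ε) / (ε * (1 - exp (-2))) * (A + 1 / (c - ε)) *
          ((1 - exp (-2)) * E / (r * (1 + r))) := by
        gcongr
        nlinarith
    _ ≤ _ := by
        unfold psi2
        gcongr
        exact one_sub_exp_neg_mul_exp_le hX

end Psi1

theorem stmt_3 (c ε : ℝ) (hε : 0 < ε) (hεc : ε < c) :
    ∀ r : ℝ, 0 < r → psi1 c ε r ≤ C0const ε c * psi2 ε r := by
  intro r hr
  have hψ : 0 ≤ psi2 ε r :=
    div_nonneg (sub_nonneg.2 (one_le_exp (by positivity))) (by positivity)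
  rcases le_total r (2 / √ε) with hr₀ | hr₀
  · exact (psi1_le_of_le_two_div_sqrt hε hεc hr hr₀).trans
      (mul_le_mul_of_nonneg_right (le_max_left _ _) hψ)
  · exact (psi1_le_of_two_div_sqrt_le hε hεc hr₀).trans
      (mul_le_mul_of_nonneg_right (le_max_right _ _) hψ)
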